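/- arXiv:1710.07767 — 3 statements merged into one kernel-verified Lean document; each statement's English description precedes it below -/
import Mathlib

section
/- Let A ≥ e^{e²} be real, let w = A²⁵, U = ∏_{p ≤ w} p (product over primes) and W = 2U. Let a, q, r be integers with q > 0, gcd(a, q) = 1 and gcd(r, W) = 1. If q does not divide 2W and every prime divisor of q is ≤ w, then V_q(a, r) = 0. -/
open Finset

/-- `e(x) = exp(2πix)`. -/
noncomputable def eF (x : ℝ) : ℂ := Complex.exp (2 * Real.pi * Complex.I * x)

/-- `V_q(a, r) = ∑_{0 ≤ m < q, gcd(r + mW, qW) = 1} e(a (r + mW)² / q)`. -/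
noncomputable def Vqar (q W : ℕ) (a r : ℤ) : ℂ :=
  ∑ m ∈ Finset.range q,
    if Int.gcd (r + (m : ℤ) * W) ((q : ℤ) * W) = 1 then
      eF (((a * (r + (m : ℤ) * W) ^ 2 : ℤ) : ℝ) / (q : ℝ)) else 0

/-!
Every prime factor of `q` divides `W`, so the coprimality condition in `V_q(a, r)` always holds
and `V_q(a, r)` is the complete sum of the phases `f m = e(a (r + mW)² / q)`, which are `q`-periodic
in `m`. Since `q ∤ 2W`, some prime `p` occurs in `q` to a higher power than in `2W`, say
`p^(k+1) ∣ q` with `p^k ∥ 2W`. Shifting `m` by `t = q / p^(k+1)` multiplies `f m` by the constant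
`e(a t W (2r + tW) / q)`: the cross term `2atW² m / q` is an integer because `p^(k+1) ∣ W²`.
The constant is not `1`, as `p ∤ a r` forces `p^(k+1) ∣ 2W` otherwise. A periodic sum that is
multiplied by a constant `≠ 1` under a shift vanishes.
-/

lemma eF_add (x y : ℝ) : eF (x + y) = eF x * eF y := by
  simp only [eF, Complex.ofReal_add, mul_add, Complex.exp_add]

lemma eF_intCast (n : ℤ) : eF n = 1 := by
  rw [eF, mul_comm]
  exact_mod_cast Complex.exp_int_mul_two_pi_mul_I n

lemma eF_intCast_div_eq_one_iff {q : ℕ} (hq : q ≠ 0) (n : ℤ) :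
    eF ((n : ℝ) / q) = 1 ↔ (q : ℤ) ∣ n := by
  have hq' : (q : ℝ) ≠ 0 := Nat.cast_ne_zero.mpr hq
  constructor
  · rw [eF, Complex.exp_eq_one_iff]
    rintro ⟨k, hk⟩
    have hk' : (((n : ℝ) / q : ℝ) : ℂ) = k := by
      have h2πI : 2 * (Real.pi : ℂ) * Complex.I ≠ 0 := by simp [Real.pi_ne_zero]
      exact mul_left_cancel₀ h2πI (by rw [hk]; ring)
    have hnk : (n : ℝ) = k * q := by
      rw [← div_eq_iff hq']; exact_mod_cast hk'
    exact ⟨k, by rw [mul_comm]; exact_mod_cast hnk⟩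
  · rintro ⟨k, rfl⟩
    rw [Int.cast_mul, Int.cast_natCast, mul_div_cancel_left₀ _ hq', eF_intCast]

lemma eF_add_intCast (x : ℝ) (n : ℤ) : eF (x + n) = eF x := by
  rw [eF_add, eF_intCast, mul_one]

lemma Finset.sum_range_add_of_periodic {M : Type*} [AddCommMonoid M] {f : ℕ → M} {q : ℕ}
    (hf : Function.Periodic f q) (t : ℕ) :
    ∑ m ∈ range q, f (m + t) = ∑ m ∈ range q, f m := by
  induction t with
  | zero => rfl
  | succ t ih =>
    rw [← ih]
    rcases q with _ | n
    · simp
    · rw [Finset.sum_range_succ, Finset.sum_range_succ' (fun m => f (m + t)),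
        show n + (t + 1) = t + (n + 1) by omega, hf t, zero_add]
      simp only [add_right_comm _ 1 t, add_assoc]

lemma Finset.sum_range_eq_zero_of_shift {R : Type*} [Ring R] [NoZeroDivisors R] {f : ℕ → R}
    {q t : ℕ} {c : R} (hf : Function.Periodic f q) (hshift : ∀ m, f (m + t) = c * f m)
    (hc : c ≠ 1) : ∑ m ∈ range q, f m = 0 := by
  have h : (c - 1) * ∑ m ∈ range q, f m = 0 := by
    rw [sub_mul, one_mul, Finset.mul_sum, ← Finset.sum_congr rfl fun m _ => hshift m,
      Finset.sum_range_add_of_periodic hf, sub_self]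
  exact (mul_eq_zero.mp h).resolve_left (sub_ne_zero.mpr hc)

noncomputable def quadPhase (q W : ℕ) (a r : ℤ) (m : ℕ) : ℂ :=
  eF (((a * (r + (m : ℤ) * W) ^ 2 : ℤ) : ℝ) / (q : ℝ))

section QuadPhase

variable {q W t : ℕ} {a r : ℤ}

lemma quadPhase_add (hS : (q : ℤ) ∣ 2 * a * t * W ^ 2) (m : ℕ) :
    quadPhase q W a r (m + t) =
      eF (((a * t * W * (2 * r + t * W) : ℤ) : ℝ) / q) * quadPhase q W a r m := by
  obtain ⟨s, hs⟩ := hS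
  have hz : a * (r + ((m + t : ℕ) : ℤ) * W) ^ 2 =
      a * (r + (m : ℤ) * W) ^ 2 + a * t * W * (2 * r + t * W) + q * (s * m) := by
    push_cast; linear_combination (m : ℤ) * hs
  rcases eq_or_ne q 0 with rfl | hq
  · simp [quadPhase, eF]
  have hsplit : (((a * (r + ((m + t : ℕ) : ℤ) * W) ^ 2 : ℤ) : ℝ) / q) =
      ((a * (r + (m : ℤ) * W) ^ 2 : ℤ) : ℝ) / q + ((a * t * W * (2 * r + t * W) : ℤ) : ℝ) / q
        + ((s * m : ℤ) : ℝ) := by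
    rw [hz]; push_cast; field_simp
  rw [quadPhase, hsplit, eF_add_intCast, eF_add, mul_comm, quadPhase]

lemma quadPhase_periodic (hq : q ≠ 0) : Function.Periodic (quadPhase q W a r) q := fun m => by
  rw [quadPhase_add ⟨2 * a * W ^ 2, by ring⟩ m,
    (eF_intCast_div_eq_one_iff hq _).mpr ⟨a * W * (2 * r + q * W), by ring⟩, one_mul]

lemma sum_quadPhase_eq_zero (hq : q ≠ 0) (hS : (q : ℤ) ∣ 2 * a * t * W ^ 2)
    (hD : ¬ (q : ℤ) ∣ a * t * W * (2 * r + t * W)) :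
    ∑ m ∈ range q, quadPhase q W a r m = 0 :=
  Finset.sum_range_eq_zero_of_shift (quadPhase_periodic hq) (quadPhase_add hS)
    (by rwa [Ne, eF_intCast_div_eq_one_iff hq])

end QuadPhase

lemma Vqar_eq_sum_quadPhase {q W : ℕ} {a r : ℤ}
    (hgcd : ∀ m : ℕ, Int.gcd (r + (m : ℤ) * W) ((q : ℤ) * W) = 1) :
    Vqar q W a r = ∑ m ∈ range q, quadPhase q W a r m :=
  Finset.sum_congr rfl fun m _ => if_pos (hgcd m)

lemma Int.gcd_eq_one_of_forall_prime_dvd {x : ℤ} {q W : ℕ} (h : Int.gcd x W = 1)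
    (hqW : ∀ p : ℕ, p.Prime → p ∣ q → p ∣ W) : Int.gcd x q = 1 :=
  Nat.coprime_of_dvd fun p hp hpx hpq => hp.not_dvd_one (h ▸ Nat.dvd_gcd hpx (hqW p hp hpq))

lemma gcd_add_mul_eq_one {q W : ℕ} {r : ℤ} (hrW : Int.gcd r W = 1)
    (hqW : ∀ p : ℕ, p.Prime → p ∣ q → p ∣ W) (m : ℤ) :
    Int.gcd (r + m * W) ((q : ℤ) * W) = 1 := by
  have hW : IsCoprime (r + m * W) W := (Int.isCoprime_iff_gcd_eq_one.mpr hrW).add_mul_right_left m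
  have hq : IsCoprime (r + m * W) q := Int.isCoprime_iff_gcd_eq_one.mpr
    (Int.gcd_eq_one_of_forall_prime_dvd (Int.isCoprime_iff_gcd_eq_one.mp hW) hqW)
  exact Int.isCoprime_iff_gcd_eq_one.mp (hq.mul_right hW)

lemma Int.not_dvd_of_gcd_eq_one {p : ℕ} (hp : p.Prime) {x y : ℤ} (h : Int.gcd x y = 1)
    (hy : (p : ℤ) ∣ y) : ¬ (p : ℤ) ∣ x := fun hx =>
  hp.not_dvd_one (h ▸ Int.dvd_gcd hx hy)

lemma Nat.exists_prime_pow_succ_factorization_dvd_of_not_dvd {q n : ℕ} (hq : q ≠ 0)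
    (hn : n ≠ 0) (h : ¬ q ∣ n) : ∃ p, p.Prime ∧ p ^ (n.factorization p + 1) ∣ q := by
  by_contra! hall
  refine h ((Nat.factorization_le_iff_dvd hq hn).mp fun p => ?_)
  by_cases hp : p.Prime
  · by_contra! hlt
    exact hall p hp ((hp.pow_dvd_iff_le_factorization hq).mpr hlt)
  · simp [Nat.factorization_eq_zero_of_not_prime q hp]

lemma pow_succ_dvd_sq_of_dvd_two_mul {p k U W : ℕ} (hW : W = 2 * U) (hpU : p ∣ U)
    (hpk : p ^ k ∣ 2 * W) : p ^ (k + 1) ∣ W ^ 2 := by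
  rw [pow_succ, show W ^ 2 = 2 * W * U by rw [hW]; ring]
  exact mul_dvd_mul hpk hpU

lemma not_pow_succ_mul_dvd {p : ℤ} (hp : Prime p) {k : ℕ} {t W a r : ℤ} (ht : t ≠ 0)
    (hW : p ^ (k + 1) ∣ W ^ 2) (hk : ¬ p ^ (k + 1) ∣ 2 * W) (ha : ¬ p ∣ a) (hr : ¬ p ∣ r) :
    ¬ p ^ (k + 1) * t ∣ a * t * W * (2 * r + t * W) := by
  intro h
  rw [show a * t * W * (2 * r + t * W) = (a * r * (2 * W) + a * t * W ^ 2) * t by ring,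
    mul_dvd_mul_iff_right ht, dvd_add_left (hW.mul_left _)] at h
  have har : IsCoprime (p ^ (k + 1)) (a * r) :=
    ((hp.coprime_iff_not_dvd).mpr fun hpar => (hp.dvd_or_dvd hpar).elim ha hr).pow_left
  exact hk (har.dvd_of_dvd_mul_left h)

noncomputable def primeProd (x : ℝ) : ℕ :=
  ∏ p ∈ (Finset.range (⌊x⌋₊ + 1)).filter (fun p : ℕ => p.Prime ∧ (p : ℝ) ≤ x), p

lemma dvd_primeProd {x : ℝ} {p : ℕ} (hp : p.Prime) (hpx : (p : ℝ) ≤ x) : p ∣ primeProd x :=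
  Finset.dvd_prod_of_mem _
    (mem_filter.mpr ⟨mem_range.mpr (Nat.lt_succ_of_le (Nat.le_floor hpx)), hp, hpx⟩)

lemma primeProd_ne_zero (x : ℝ) : primeProd x ≠ 0 :=
  prod_ne_zero_iff.mpr fun _ hp => (mem_filter.mp hp).2.1.ne_zero

theorem stmt_10_general (A : ℝ) (U W : ℕ)
    (hU : U = (∏ p ∈ (Finset.range (⌊A ^ 25⌋₊ + 1)).filter
        (fun p : ℕ => p.Prime ∧ (p : ℝ) ≤ A ^ 25), p))
    (hW : W = 2 * U)
    (q : ℕ) (hq : 0 < q) (a r : ℤ)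
    (haq : Int.gcd a (q : ℤ) = 1) (hrW : Int.gcd r (W : ℤ) = 1)
    (hndvd : ¬ q ∣ 2 * W)
    (hsmooth : ∀ p : ℕ, p.Prime → p ∣ q → (p : ℝ) ≤ A ^ 25) :
    Vqar q W a r = 0 := by
  have hqU : ∀ p : ℕ, p.Prime → p ∣ q → p ∣ U := fun p hp hpq =>
    hU ▸ dvd_primeProd hp (hsmooth p hp hpq)
  have hqW : ∀ p : ℕ, p.Prime → p ∣ q → p ∣ W := fun p hp hpq =>
    hW ▸ dvd_mul_of_dvd_right (hqU p hp hpq) 2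
  have hW0 : 2 * W ≠ 0 := by
    rw [hW, hU]
    exact mul_ne_zero two_ne_zero (mul_ne_zero two_ne_zero (primeProd_ne_zero _))
  obtain ⟨p, hp, t, hqt⟩ :=
    Nat.exists_prime_pow_succ_factorization_dvd_of_not_dvd hq.ne' hW0 hndvd
  set k := (2 * W).factorization p
  have hpq : p ∣ q := (dvd_pow_self p k.succ_ne_zero).trans ⟨t, hqt⟩
  have hpW2 : (p : ℤ) ^ (k + 1) ∣ (W : ℤ) ^ 2 := by
    exact_mod_cast pow_succ_dvd_sq_of_dvd_two_mul hW (hqU p hp hpq) (Nat.ordProj_dvd _ _)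
  have hp2W : ¬ (p : ℤ) ^ (k + 1) ∣ 2 * W := by
    exact_mod_cast Nat.pow_succ_factorization_not_dvd hW0 hp
  have ht : (t : ℤ) ≠ 0 := Nat.cast_ne_zero.mpr (right_ne_zero_of_mul (hqt ▸ hq.ne'))
  have hqt' : (q : ℤ) = (p : ℤ) ^ (k + 1) * t := by rw [hqt, Nat.cast_mul, Nat.cast_pow]
  rw [Vqar_eq_sum_quadPhase fun m => gcd_add_mul_eq_one hrW hqW m]
  refine sum_quadPhase_eq_zero hq.ne' (t := t) ?_ ?_ <;> rw [hqt']
  · exact (mul_dvd_mul hpW2 (dvd_refl _)).trans ⟨2 * a, by ring⟩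
  · exact not_pow_succ_mul_dvd (Nat.prime_iff_prime_int.mp hp) ht hpW2 hp2W
      (Int.not_dvd_of_gcd_eq_one hp haq (Int.natCast_dvd_natCast.mpr hpq))
      (Int.not_dvd_of_gcd_eq_one hp hrW (Int.natCast_dvd_natCast.mpr (hqW p hp hpq)))

/-- vanishing of `V_q(a,r)` for smooth `q` not dividing `2W`. -/
theorem stmt_10 (A : ℝ) (hA : A ≥ Real.exp (Real.exp 2)) (U W : ℕ)
    (hU : U = (∏ p ∈ (Finset.range (⌊A ^ 25⌋₊ + 1)).filter
        (fun p : ℕ => p.Prime ∧ (p : ℝ) ≤ A ^ 25), p))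
    (hW : W = 2 * U)
    (q : ℕ) (hq : 0 < q) (a r : ℤ)
    (haq : Int.gcd a (q : ℤ) = 1) (hrW : Int.gcd r (W : ℤ) = 1)
    (hndvd : ¬ q ∣ 2 * W)
    (hsmooth : ∀ p : ℕ, p.Prime → p ∣ q → (p : ℝ) ≤ A ^ 25) :
    Vqar q W a r = 0 :=
  stmt_10_general A U W hU hW q hq a r haq hrW hndvd hsmooth
end

section
/- Let N ≥ 2 be an integer and let S be a set of squares of primes contained in the interval (N, 4N]. Then (4/5)·√N·E₆(S) ≤ Re ∫₀¹ Ŝ(t)⁶ · Ŝ(−t)⁵ · ψ(−t) dt. -/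
open Finset

/-- The set of primes `p` with `p ^ 2 ∈ S`. -/
def primesOf (S : Finset ℕ) : Finset ℕ :=
  (S.image Nat.sqrt).filter fun p => p.Prime ∧ p ^ 2 ∈ S

/-- `E₆(S)`. -/
noncomputable def E6 (S : Finset ℕ) : ℝ :=
  ∑ p ∈ (Fintype.piFinset fun _ : Fin 12 => primesOf S).filter
      (fun p => p 0 ^ 2 + p 1 ^ 2 + p 2 ^ 2 + p 3 ^ 2 + p 4 ^ 2 + p 5 ^ 2
        = p 6 ^ 2 + p 7 ^ 2 + p 8 ^ 2 + p 9 ^ 2 + p 10 ^ 2 + p 11 ^ 2),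
    ∏ i, Real.log (p i)

/-- `Ŝ(t) = ∑_{p² ∈ S} (log p) e(p² t)`. -/
noncomputable def Shat (S : Finset ℕ) (t : ℝ) : ℂ :=
  ∑ p ∈ primesOf S, ((Real.log p : ℝ) : ℂ) * eF ((p : ℝ) ^ 2 * t)

/-- The triangle function `α(t)`. -/
noncomputable def alphaFun (N : ℕ) (t : ℝ) : ℝ :=
  if |t| ≤ 5 * N / 2 then 1 - |2 * t / (5 * N)| else 0

/-- `β(t) = α(t − 5N/2)`. -/
noncomputable def betaFun (N : ℕ) (t : ℝ) : ℝ := alphaFun N (t - 5 * N / 2)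

/-- `ψ(t)`. -/
noncomputable def psiFun (N : ℕ) (t : ℝ) : ℂ :=
  ∑ n ∈ (Finset.range (5 * N + 1)).filter Nat.Prime,
    ((2 * n * Real.log n * betaFun N ((n : ℝ) ^ 2) : ℝ) : ℂ) * eF ((n : ℝ) ^ 2 * t)

/-! ### Auxiliary definitions and lemmas -/

def KK (a : Fin 6 → ℕ) (b : Fin 5 → ℕ) (n : ℕ) : ℤ :=
  (∑ i, (a i : ℤ) ^ 2) - (∑ i, (b i : ℤ) ^ 2) - (n : ℤ) ^ 2

noncomputable def wt (N : ℕ) (n : ℕ) : ℝ := 2 * n * Real.log n * betaFun N ((n : ℝ) ^ 2)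

lemma eF_sum {m : ℕ} (x : Fin m → ℝ) : ∏ i, eF (x i) = eF (∑ i, x i) := by
  simp only [eF]
  rw [← Complex.exp_sum]
  congr 1
  push_cast
  rw [Finset.mul_sum]

lemma eF_cont (c : ℂ) (x : ℝ) : Continuous fun t : ℝ => c * eF (x * t) := by
  unfold eF
  fun_prop

lemma eF_int_integral (k : ℤ) :
    (∫ t in (0:ℝ)..1, eF ((k : ℝ) * t)) = if k = 0 then 1 else 0 := by
  by_cases hk : k = 0
  · simp [hk, eF]
  · rw [if_neg hk]
    have h1 : Set.EqOn (fun t : ℝ => eF ((k : ℝ) * t))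
        (fun t : ℝ => Complex.exp ((2 * (Real.pi : ℂ) * Complex.I * (k : ℂ)) * t))
        (Set.uIcc (0:ℝ) 1) := by
      intro t _
      simp only [eF]
      congr 1
      push_cast
      ring
    rw [intervalIntegral.integral_congr h1]
    have hc : (2 * (Real.pi : ℂ) * Complex.I * (k : ℂ)) ≠ 0 := by
      simp [Real.pi_ne_zero, Complex.I_ne_zero, hk]
    rw [integral_exp_mul_complex hc]
    rw [show (2 * (Real.pi : ℂ) * Complex.I * (k : ℂ)) * (1:ℝ)
        = (k : ℂ) * (2 * (Real.pi : ℂ) * Complex.I) from by push_cast; ring]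
    rw [Complex.exp_int_mul_two_pi_mul_I]
    simp

lemma sum_pow_piFinset (s : Finset ℕ) (f : ℕ → ℂ) (m : ℕ) :
    (∑ x ∈ s, f x) ^ m
      = ∑ a ∈ Fintype.piFinset (fun _ : Fin m => s), ∏ i, f (a i) := by
  rw [← Finset.prod_univ_sum]
  simp

lemma Shat_pow (S : Finset ℕ) (m : ℕ) (t : ℝ) :
    Shat S t ^ m = ∑ a ∈ Fintype.piFinset (fun _ : Fin m => primesOf S),
      ((∏ i, Real.log (a i) : ℝ) : ℂ) * eF ((∑ i, (a i : ℝ) ^ 2) * t) := by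
  rw [Shat, sum_pow_piFinset]
  refine Finset.sum_congr rfl fun a _ => ?_
  rw [Finset.prod_mul_distrib, eF_sum (fun i => (a i : ℝ) ^ 2 * t), ← Finset.sum_mul]
  push_cast
  ring

lemma prod_univ_twelve {M : Type*} [CommMonoid M] (f : Fin 12 → M) :
    ∏ i, f i = f 0 * f 1 * f 2 * f 3 * f 4 * f 5 * f 6 * f 7 * f 8 * f 9 * f 10 * f 11 := by
  rw [Fin.prod_univ_castSucc, Fin.prod_univ_castSucc, Fin.prod_univ_castSucc,
    Fin.prod_univ_castSucc, Fin.prod_univ_eight]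
  rfl

lemma E6_eq (S : Finset ℕ) :
    E6 S = ∑ a ∈ Fintype.piFinset (fun _ : Fin 6 => primesOf S),
      ∑ b ∈ Fintype.piFinset (fun _ : Fin 5 => primesOf S),
      ∑ n ∈ primesOf S,
        (if KK a b n = 0
          then (∏ i, Real.log (a i)) * (∏ i, Real.log (b i)) * Real.log n else 0) := by
  have hrhs : (∑ a ∈ Fintype.piFinset (fun _ : Fin 6 => primesOf S),
      ∑ b ∈ Fintype.piFinset (fun _ : Fin 5 => primesOf S),
      ∑ n ∈ primesOf S,
        (if KK a b n = 0
          then (∏ i, Real.log (a i)) * (∏ i, Real.log (b i)) * Real.log n else 0))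
      = ∑ x ∈ (Fintype.piFinset (fun _ : Fin 6 => primesOf S)) ×ˢ
          ((Fintype.piFinset (fun _ : Fin 5 => primesOf S)) ×ˢ primesOf S),
        (if KK x.1 x.2.1 x.2.2 = 0
          then (∏ i, Real.log (x.1 i)) * (∏ i, Real.log (x.2.1 i)) * Real.log x.2.2 else 0) := by
    rw [Finset.sum_product]
    refine Finset.sum_congr rfl fun a _ => ?_
    rw [Finset.sum_product]
  rw [hrhs, E6, Finset.sum_filter]
  refine Finset.sum_nbij'
    (i := fun p => ((![p 0, p 1, p 2, p 3, p 4, p 5] : Fin 6 → ℕ),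
        (![p 6, p 7, p 8, p 9, p 10] : Fin 5 → ℕ), p 11))
    (j := fun x => (![x.1 0, x.1 1, x.1 2, x.1 3, x.1 4, x.1 5,
        x.2.1 0, x.2.1 1, x.2.1 2, x.2.1 3, x.2.1 4, x.2.2] : Fin 12 → ℕ))
    ?_ ?_ ?_ ?_ ?_
  · intro p hp
    rw [Fintype.mem_piFinset] at hp
    simp only [Finset.mem_product, Fintype.mem_piFinset]
    refine ⟨fun j => ?_, fun j => ?_, hp 11⟩
    · fin_cases j
      · exact hp 0
      · exact hp 1
      · exact hp 2
      · exact hp 3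
      · exact hp 4
      · exact hp 5
    · fin_cases j
      · exact hp 6
      · exact hp 7
      · exact hp 8
      · exact hp 9
      · exact hp 10
  · intro x hx
    simp only [Finset.mem_product, Fintype.mem_piFinset] at hx
    rw [Fintype.mem_piFinset]
    intro k
    fin_cases k
    · exact hx.1 0
    · exact hx.1 1
    · exact hx.1 2
    · exact hx.1 3
    · exact hx.1 4
    · exact hx.1 5
    · exact hx.2.1 0
    · exact hx.2.1 1
    · exact hx.2.1 2
    · exact hx.2.1 3
    · exact hx.2.1 4
    · exact hx.2.2
  · intro p _
    funext k
    fin_cases k <;> rfl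
  · intro x _
    refine Prod.ext ?_ (Prod.ext ?_ ?_)
    · funext k; fin_cases k <;> rfl
    · funext k; fin_cases k <;> rfl
    · rfl
  · intro p _
    have hiff : (p 0 ^ 2 + p 1 ^ 2 + p 2 ^ 2 + p 3 ^ 2 + p 4 ^ 2 + p 5 ^ 2
        = p 6 ^ 2 + p 7 ^ 2 + p 8 ^ 2 + p 9 ^ 2 + p 10 ^ 2 + p 11 ^ 2)
        ↔ KK ![p 0, p 1, p 2, p 3, p 4, p 5] ![p 6, p 7, p 8, p 9, p 10] (p 11) = 0 := by
      rw [KK, Fin.sum_univ_six, Fin.sum_univ_five]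
      show _ ↔ ((p 0 : ℤ) ^ 2 + (p 1 : ℤ) ^ 2 + (p 2 : ℤ) ^ 2 + (p 3 : ℤ) ^ 2 + (p 4 : ℤ) ^ 2
          + (p 5 : ℤ) ^ 2) - ((p 6 : ℤ) ^ 2 + (p 7 : ℤ) ^ 2 + (p 8 : ℤ) ^ 2 + (p 9 : ℤ) ^ 2
          + (p 10 : ℤ) ^ 2) - (p 11 : ℤ) ^ 2 = 0
      constructor
      · intro h
        have h2 := congrArg (Nat.cast : ℕ → ℤ) h
        push_cast at h2
        linarith
      · intro h
        have h2 : ((p 0 ^ 2 + p 1 ^ 2 + p 2 ^ 2 + p 3 ^ 2 + p 4 ^ 2 + p 5 ^ 2 : ℕ) : ℤ)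
            = ((p 6 ^ 2 + p 7 ^ 2 + p 8 ^ 2 + p 9 ^ 2 + p 10 ^ 2 + p 11 ^ 2 : ℕ) : ℤ) := by
          push_cast
          linarith
        exact_mod_cast h2
    have hval : (∏ i, Real.log (p i))
        = (∏ i, Real.log ((![p 0, p 1, p 2, p 3, p 4, p 5] : Fin 6 → ℕ) i))
          * (∏ i, Real.log ((![p 6, p 7, p 8, p 9, p 10] : Fin 5 → ℕ) i)) * Real.log (p 11) := by
      rw [prod_univ_twelve, Fin.prod_univ_six, Fin.prod_univ_five]
      show _ = (Real.log (p 0) * Real.log (p 1) * Real.log (p 2) * Real.log (p 3)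
          * Real.log (p 4) * Real.log (p 5))
        * (Real.log (p 6) * Real.log (p 7) * Real.log (p 8) * Real.log (p 9) * Real.log (p 10))
        * Real.log (p 11)
      ring
    rw [if_congr hiff hval rfl]

lemma betaFun_nonneg {N : ℕ} (hN : 0 < (N : ℝ)) (t : ℝ) : 0 ≤ betaFun N t := by
  rw [betaFun, alphaFun]
  split
  case isTrue h =>
    have h5 : (0:ℝ) < 5 * N := by positivity
    have h2 : |2 * (t - 5 * N / 2)| ≤ 5 * N := by
      rw [abs_le] at h ⊢
      constructor <;> nlinarith [h.1, h.2]
    have : |2 * (t - 5 * N / 2) / (5 * N)| ≤ 1 := by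
      rw [abs_div, abs_of_pos h5, div_le_one h5]
      exact h2
    linarith
  case isFalse => exact le_refl 0

lemma betaFun_ge {N : ℕ} (hN : 0 < (N : ℝ)) {x : ℝ} (h1 : (N : ℝ) < x) (h2 : x ≤ 4 * N) :
    2 / 5 ≤ betaFun N x := by
  rw [betaFun, alphaFun, if_pos (by rw [abs_le]; constructor <;> nlinarith)]
  have h5 : (0:ℝ) < 5 * N := by positivity
  have h3 : |2 * (x - 5 * N / 2)| ≤ 3 * N := by
    rw [abs_le]; constructor <;> nlinarith
  have h4 : |2 * (x - 5 * N / 2) / (5 * N)| ≤ 3 / 5 := by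
    rw [abs_div, abs_of_pos h5, div_le_iff₀ h5]
    nlinarith
  linarith

theorem stmt_14 (N : ℕ) (hN : 2 ≤ N) (S : Finset ℕ)
    (hS : ∀ x ∈ S, (∃ p : ℕ, p.Prime ∧ x = p ^ 2) ∧ N < x ∧ x ≤ 4 * N) :
    (4 / 5) * Real.sqrt N * E6 S ≤
      (∫ t in (0 : ℝ)..1, Shat S t ^ 6 * Shat S (-t) ^ 5 * psiFun N (-t)).re := by
  have hN0 : (0:ℝ) < N := by
    have : 0 < N := by omega
    exact_mod_cast this
  have hPmem : ∀ p ∈ primesOf S, p.Prime ∧ N < p ^ 2 ∧ p ^ 2 ≤ 4 * N := by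
    intro p hp
    rw [primesOf, Finset.mem_filter] at hp
    exact ⟨hp.2.1, (hS _ hp.2.2).2.1, (hS _ hp.2.2).2.2⟩
  have hQprime : ∀ n ∈ (Finset.range (5 * N + 1)).filter Nat.Prime, n.Prime :=
    fun n hn => (Finset.mem_filter.1 hn).2
  have hPQ : primesOf S ⊆ (Finset.range (5 * N + 1)).filter Nat.Prime := by
    intro p hp
    obtain ⟨h1, h2, h3⟩ := hPmem p hp
    simp only [Finset.mem_filter, Finset.mem_range]
    have h4 : p ≤ p ^ 2 := Nat.le_self_pow (by norm_num) p
    exact ⟨by omega, h1⟩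
  have hlogQ : ∀ n ∈ (Finset.range (5 * N + 1)).filter Nat.Prime, 0 ≤ Real.log n := by
    intro n hn
    refine Real.log_nonneg ?_
    have := (hQprime n hn).one_lt
    exact_mod_cast this.le
  have hwt0 : ∀ n ∈ (Finset.range (5 * N + 1)).filter Nat.Prime, 0 ≤ wt N n := by
    intro n hn
    have h1 : (0:ℝ) ≤ 2 * n := by positivity
    exact mul_nonneg (mul_nonneg h1 (hlogQ n hn)) (betaFun_nonneg hN0 _)
  have hprodlog : ∀ {m : ℕ} (a : Fin m → ℕ), (∀ i, a i ∈ primesOf S) →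
      0 ≤ ∏ i, Real.log (a i) := by
    intro m a ha
    refine Finset.prod_nonneg fun i _ => Real.log_nonneg ?_
    have := (hPmem _ (ha i)).1.one_lt
    exact_mod_cast this.le
  -- wt lower bound for n ∈ primesOf S
  have hwtge : ∀ n ∈ primesOf S, (4 / 5) * Real.sqrt N * Real.log n ≤ wt N n := by
    intro n hn
    obtain ⟨h1, h2, h3⟩ := hPmem n hn
    have hn2 : (N : ℝ) < (n : ℝ) ^ 2 := by exact_mod_cast h2
    have hn3 : ((n : ℝ)) ^ 2 ≤ 4 * N := by exact_mod_cast h3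
    have hs : Real.sqrt N ≤ n := by
      have := Real.sqrt_le_sqrt hn2.le
      rwa [Real.sqrt_sq (by positivity : (0:ℝ) ≤ (n:ℝ))] at this
    have hβ : 2 / 5 ≤ betaFun N ((n : ℝ) ^ 2) := betaFun_ge hN0 hn2 hn3
    have hlog : 0 ≤ Real.log n := by
      refine Real.log_nonneg ?_
      exact_mod_cast h1.one_lt.le
    have hs0 : 0 ≤ Real.sqrt N := Real.sqrt_nonneg N
    have h5 : Real.sqrt N * (2 / 5) ≤ (n : ℝ) * betaFun N ((n : ℝ) ^ 2) :=
      mul_le_mul hs hβ (by norm_num) (le_trans hs0 hs)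
    rw [wt]
    nlinarith [mul_nonneg hlog (sub_nonneg.mpr h5)]
  -- the integral identity
  have hfun : ∀ t : ℝ, Shat S t ^ 6 * Shat S (-t) ^ 5 * psiFun N (-t)
      = ∑ a ∈ Fintype.piFinset (fun _ : Fin 6 => primesOf S),
        ∑ b ∈ Fintype.piFinset (fun _ : Fin 5 => primesOf S),
        ∑ n ∈ (Finset.range (5 * N + 1)).filter Nat.Prime,
          (((∏ i, Real.log (a i)) * (∏ i, Real.log (b i)) * wt N n : ℝ) : ℂ)
            * eF ((KK a b n : ℝ) * t) := by
    intro t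
    rw [Shat_pow, Shat_pow, psiFun, Finset.sum_mul_sum, Finset.sum_mul]
    refine Finset.sum_congr rfl fun a _ => ?_
    rw [Finset.sum_mul]
    refine Finset.sum_congr rfl fun b _ => ?_
    rw [Finset.mul_sum]
    refine Finset.sum_congr rfl fun n _ => ?_
    have he : eF ((KK a b n : ℝ) * t)
        = eF ((∑ i, (a i : ℝ) ^ 2) * t) * eF ((∑ i, (b i : ℝ) ^ 2) * (-t))
          * eF ((n : ℝ) ^ 2 * (-t)) := by
      rw [← eF_add, ← eF_add]
      congr 1
      rw [KK]
      push_cast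
      ring
    rw [he, wt]
    push_cast
    ring
  have hre : (∫ t in (0 : ℝ)..1, Shat S t ^ 6 * Shat S (-t) ^ 5 * psiFun N (-t)).re =
      ∑ a ∈ Fintype.piFinset (fun _ : Fin 6 => primesOf S),
        ∑ b ∈ Fintype.piFinset (fun _ : Fin 5 => primesOf S),
        ∑ n ∈ (Finset.range (5 * N + 1)).filter Nat.Prime,
          (if KK a b n = 0
            then (∏ i, Real.log (a i)) * (∏ i, Real.log (b i)) * wt N n else 0) := by
    rw [intervalIntegral.integral_congr (fun t _ => hfun t)]
    rw [intervalIntegral.integral_finset_sum (fun a _ =>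
      ((continuous_finset_sum _ fun b _ => continuous_finset_sum _ fun n _ =>
        eF_cont _ _).intervalIntegrable 0 1))]
    rw [show (∑ a ∈ Fintype.piFinset (fun _ : Fin 6 => primesOf S),
        ∫ t in (0:ℝ)..1, ∑ b ∈ Fintype.piFinset (fun _ : Fin 5 => primesOf S),
          ∑ n ∈ (Finset.range (5 * N + 1)).filter Nat.Prime,
            (((∏ i, Real.log (a i)) * (∏ i, Real.log (b i)) * wt N n : ℝ) : ℂ)
              * eF ((KK a b n : ℝ) * t))
      = ((∑ a ∈ Fintype.piFinset (fun _ : Fin 6 => primesOf S),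
        ∑ b ∈ Fintype.piFinset (fun _ : Fin 5 => primesOf S),
        ∑ n ∈ (Finset.range (5 * N + 1)).filter Nat.Prime,
          (if KK a b n = 0
            then (∏ i, Real.log (a i)) * (∏ i, Real.log (b i)) * wt N n else 0) : ℝ) : ℂ)
      from ?_, Complex.ofReal_re]
    rw [Complex.ofReal_sum]
    refine Finset.sum_congr rfl fun a _ => ?_
    rw [intervalIntegral.integral_finset_sum (fun b _ =>
      ((continuous_finset_sum _ fun n _ => eF_cont _ _).intervalIntegrable 0 1)),
      Complex.ofReal_sum]
    refine Finset.sum_congr rfl fun b _ => ?_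
    rw [intervalIntegral.integral_finset_sum (fun n _ =>
      ((eF_cont _ _).intervalIntegrable 0 1)), Complex.ofReal_sum]
    refine Finset.sum_congr rfl fun n _ => ?_
    rw [intervalIntegral.integral_const_mul, eF_int_integral]
    split <;> simp
  rw [hre, E6_eq, Finset.mul_sum]
  refine Finset.sum_le_sum fun a ha => ?_
  rw [Finset.mul_sum]
  refine Finset.sum_le_sum fun b hb => ?_
  rw [Fintype.mem_piFinset] at ha hb
  refine le_trans ?_ (Finset.sum_le_sum_of_subset_of_nonneg hPQ fun n hn _ => ?_)
  · rw [Finset.mul_sum]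
    refine Finset.sum_le_sum fun n hn => ?_
    by_cases h : KK a b n = 0
    · rw [if_pos h, if_pos h]
      have hA : 0 ≤ (∏ i, Real.log (a i)) := hprodlog a ha
      have hB : 0 ≤ (∏ i, Real.log (b i)) := hprodlog b hb
      have h6 := hwtge n hn
      have h7 := mul_le_mul_of_nonneg_left h6 (mul_nonneg hA hB)
      nlinarith [h7]
    · rw [if_neg h, if_neg h, mul_zero]
  · by_cases h : KK a b n = 0
    · rw [if_pos h]
      exact mul_nonneg (mul_nonneg (hprodlog a ha) (hprodlog b hb)) (hwt0 n hn)
    · rw [if_neg h]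
end

section
/- Let A ≥ e^{e²} be real and let W = 2·∏_{p ≤ A²⁵} p (product over primes). Let q be a positive integer dividing 2W, let a be any integer, and let r be an integer with gcd(r, W) = 1. Then V_q(a, r) = q·e(a·r²/q). -/
open Finset

/-- evaluation of `V_q(a,r)` when `q` divides `2W`. -/
theorem stmt_17 (A : ℝ) (hA : A ≥ Real.exp (Real.exp 2)) (W : ℕ)
    (hW : W = 2 * (∏ p ∈ (Finset.range (⌊A ^ 25⌋₊ + 1)).filter
        (fun p : ℕ => p.Prime ∧ (p : ℝ) ≤ A ^ 25), p))
    (q : ℕ) (hq : 0 < q) (hqW : q ∣ 2 * W) (a r : ℤ)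
    (hrW : Int.gcd r (W : ℤ) = 1) :
    Vqar q W a r = (q : ℂ) * eF (((a * r ^ 2 : ℤ) : ℝ) / (q : ℝ)) := by
  have h2W : (2:ℕ) ∣ W := ⟨_, hW⟩
  have hqW2 : q ∣ W ^ 2 := by
    obtain ⟨k, hk⟩ := h2W
    exact hqW.trans ⟨k, by rw [hk]; ring⟩
  have hq' : (q:ℝ) ≠ 0 := Nat.cast_ne_zero.mpr hq.ne'
  have hexp : ∀ n n' : ℤ, (q:ℤ) ∣ (n - n') → eF ((n:ℝ)/q) = eF ((n':ℝ)/q) := by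
    rintro n n' ⟨k, hk⟩
    have hn : (n:ℝ)/q = (n':ℝ)/q + k := by
      have : (n:ℝ) = n' + q * k := by
        have : n = n' + q * k := by omega
        rw [this]; push_cast; ring
      rw [this]; field_simp
    unfold eF
    rw [hn, Complex.ofReal_add, mul_add, Complex.exp_add,
      show (2*(Real.pi:ℂ)*Complex.I*((k:ℝ):ℂ)) = (k:ℂ)*(2*(Real.pi:ℂ)*Complex.I) by push_cast; ring,
      Complex.exp_int_mul_two_pi_mul_I, mul_one]
  rw [Vqar]
  have key : ∀ m ∈ Finset.range q,
      (if Int.gcd (r + (m : ℤ) * W) ((q : ℤ) * W) = 1 then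
        eF (((a * (r + (m : ℤ) * W) ^ 2 : ℤ) : ℝ) / (q : ℝ)) else 0)
        = eF (((a * r ^ 2 : ℤ) : ℝ) / (q : ℝ)) := by
    intro m _
    have h1 : IsCoprime (r + (m:ℤ) * W) ((W:ℤ)) :=
      (Int.isCoprime_iff_gcd_eq_one.mpr hrW).add_mul_right_left m
    have h2 : IsCoprime (r + (m:ℤ) * W) ((q:ℤ)) :=
      (IsCoprime.pow_right (n := 2) h1).of_isCoprime_of_dvd_right (by exact_mod_cast Int.natCast_dvd_natCast.mpr hqW2)
    have hco : Int.gcd (r + (m : ℤ) * W) ((q : ℤ) * W) = 1 :=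
      Int.isCoprime_iff_gcd_eq_one.mp (h2.mul_right h1)
    rw [if_pos hco]
    apply hexp
    have d1 : (q:ℤ) ∣ 2 * W := by exact_mod_cast Int.natCast_dvd_natCast.mpr hqW
    have d2 : (q:ℤ) ∣ (W:ℤ)^2 := by exact_mod_cast Int.natCast_dvd_natCast.mpr hqW2
    have : a * (r + (m:ℤ) * W) ^ 2 - a * r ^ 2 = (2*W) * (a*r*m) + (W:ℤ)^2 * (a*m^2) := by ring
    rw [this]
    exact dvd_add (d1.mul_right _) (d2.mul_right _)
  rw [Finset.sum_congr rfl key, Finset.sum_const, Finset.card_range, nsmul_eq_mul]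
end
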